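/- arXiv:2209.01197 — 6 statements merged into one kernel-verified Lean document; each statement's English description precedes it below -/
import Mathlib

section
/- Let Q be an ordered abelian group, Z an integer part of Q (with least positive element 1), and L a convex subgroup of Q with 1 ∈ L; set Z_L := Z ∩ L. Then any isomorphism of ordered groups f : Z → Z_L (a group isomorphism that is strictly order-preserving) extends, via the formula f̄(x) := f(⌊x⌋) + {x}, to an isomorphism of ordered groups f̄ : Q → L satisfying f̄(Z) = Z_L and f̄(1) = 1. -/
/-- A subgroup `L` of an ordered abelian group is convex if `x ≤ z ≤ y` with `x, y ∈ L`
implies `z ∈ L`. -/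
def IsConvexAddSubgroup {Q : Type*} [AddCommGroup Q] [LinearOrder Q] [IsOrderedAddMonoid Q] (L : AddSubgroup Q) : Prop :=
  ∀ ⦃x y z : Q⦄, x ∈ L → y ∈ L → x ≤ z → z ≤ y → z ∈ L

/-- `Z` is an integer part of the ordered abelian group `Q`, with least positive element `one`. -/
def IsIntegerPart {Q : Type*} [AddCommGroup Q] [LinearOrder Q] [IsOrderedAddMonoid Q] (Z : AddSubgroup Q) (one : Q) :
    Prop :=
  one ∈ Z ∧ 0 < one ∧ (∀ z ∈ Z, 0 < z → one ≤ z) ∧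
    ∀ x : Q, ∃ n ∈ Z, n ≤ x ∧ x < n + one

/-- `fl` is the floor function associated to the integer part `Z` of `Q`. -/
def IsFloor {Q : Type*} [AddCommGroup Q] [LinearOrder Q] [IsOrderedAddMonoid Q] (Z : AddSubgroup Q) (one : Q)
    (fl : Q → Q) : Prop :=
  ∀ x : Q, fl x ∈ Z ∧ fl x ≤ x ∧ x < fl x + one

/-! The extension keeps the integer part of `x` in the image of `f` and its fractional part
untouched. It is additive because the carry `⌊{x} + {y}⌋` is `0` or `1`, both fixed by `f`, and it
is strictly monotone because distinct integer parts of `x < y` are mapped at least `1` apart,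
which dominates the fractional part `{x} < 1`. -/

section

variable {Q : Type*} [AddCommGroup Q] [LinearOrder Q] [IsOrderedAddMonoid Q]
  {Z L : AddSubgroup Q} {one : Q} {fl f : Q → Q}

theorem map_zero_of_map_add (hadd : ∀ x ∈ Z, ∀ y ∈ Z, f (x + y) = f x + f y) : f 0 = 0 := by
  simpa using hadd 0 Z.zero_mem 0 Z.zero_mem

namespace IsIntegerPart

theorem add_one_le_of_lt (hZ : IsIntegerPart Z one) {a b : Q} (ha : a ∈ Z) (hb : b ∈ Z)
    (h : a < b) : a + one ≤ b :=
  le_sub_iff_add_le'.mp (hZ.2.2.1 (b - a) (Z.sub_mem hb ha) (sub_pos.mpr h))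

theorem lt_add_one_iff (hZ : IsIntegerPart Z one) {a b : Q} (ha : a ∈ Z) (hb : b ∈ Z) :
    a < b + one ↔ a ≤ b :=
  ⟨fun h => not_lt.mp fun hba => (hZ.add_one_le_of_lt hb ha hba).not_gt h,
    fun h => h.trans_lt (lt_add_of_pos_right b hZ.2.1)⟩

theorem map_one_eq_one (hZ : IsIntegerPart Z one) (hadd : ∀ x ∈ Z, ∀ y ∈ Z, f (x + y) = f x + f y)
    (hmono : StrictMonoOn f Z) (hmaps : ∀ x ∈ Z, f x ∈ Z) (hone : ∃ x ∈ Z, f x = one) :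
    f one = one := by
  obtain ⟨h1Z, h1pos, hleast, -⟩ := hZ
  obtain ⟨x, hx, hfx⟩ := hone
  have hf0 := map_zero_of_map_add hadd
  have hx_pos : 0 < x := (hmono.lt_iff_lt Z.zero_mem hx).mp (by rwa [hf0, hfx])
  have hf1_pos : 0 < f one := by simpa [hf0] using hmono Z.zero_mem h1Z h1pos
  refine le_antisymm ?_ (hleast _ (hmaps one h1Z) hf1_pos)
  exact hfx ▸ (hmono.le_iff_le h1Z hx).mpr (hleast x hx hx_pos)

end IsIntegerPart

namespace IsFloor

variable (hZ : IsIntegerPart Z one) (hfl : IsFloor Z one fl)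
include hZ hfl

theorem eq_of_le_of_lt {n x : Q} (hn : n ∈ Z) (h₁ : n ≤ x) (h₂ : x < n + one) : fl x = n := by
  obtain ⟨hm, hm₁, hm₂⟩ := hfl x
  exact le_antisymm ((hZ.lt_add_one_iff hm hn).mp (hm₁.trans_lt h₂))
    ((hZ.lt_add_one_iff hn hm).mp (h₁.trans_lt hm₂))

theorem apply_of_mem {z : Q} (hz : z ∈ Z) : fl z = z :=
  hfl.eq_of_le_of_lt hZ hz le_rfl (lt_add_of_pos_right z hZ.2.1)

theorem monotone : Monotone fl := fun x y hxy =>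
  (hZ.lt_add_one_iff (hfl x).1 (hfl y).1).mp ((hfl x).2.1.trans_lt (hxy.trans_lt (hfl y).2.2))

theorem add_left {n : Q} (hn : n ∈ Z) (x : Q) : fl (n + x) = n + fl x := by
  obtain ⟨hm, hm₁, hm₂⟩ := hfl x
  refine hfl.eq_of_le_of_lt hZ (Z.add_mem hn hm) (add_le_add_right hm₁ n) ?_
  rw [add_assoc]
  exact add_lt_add_right hm₂ n

theorem carry_eq_zero_or_eq_one (x y : Q) :
    fl (x - fl x + (y - fl y)) = 0 ∨ fl (x - fl x + (y - fl y)) = one := by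
  have hx : 0 ≤ x - fl x ∧ x - fl x < one :=
    ⟨sub_nonneg.mpr (hfl x).2.1, sub_lt_iff_lt_add'.mpr (hfl x).2.2⟩
  have hy : 0 ≤ y - fl y ∧ y - fl y < one :=
    ⟨sub_nonneg.mpr (hfl y).2.1, sub_lt_iff_lt_add'.mpr (hfl y).2.2⟩
  by_cases h : x - fl x + (y - fl y) < one
  · exact .inl (hfl.eq_of_le_of_lt hZ Z.zero_mem (add_nonneg hx.1 hy.1) (by rwa [zero_add]))
  · exact .inr (hfl.eq_of_le_of_lt hZ hZ.1 (not_lt.mp h) (add_lt_add hx.2 hy.2))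

theorem add_eq (x y : Q) : fl (x + y) = fl x + fl y + fl (x - fl x + (y - fl y)) := by
  rw [← hfl.add_left hZ (Z.add_mem (hfl x).1 (hfl y).1)]
  congr 1
  abel

end IsFloor

def floorExtend (f fl : Q → Q) (x : Q) : Q :=
  f (fl x) + (x - fl x)

theorem floorExtend_of_mem (hZ : IsIntegerPart Z one) (hfl : IsFloor Z one fl) {z : Q}
    (hz : z ∈ Z) : floorExtend f fl z = f z := by
  rw [floorExtend, hfl.apply_of_mem hZ hz, sub_self, add_zero]

theorem floorExtend_mem (hfl : IsFloor Z one fl) (hL : IsConvexAddSubgroup L) (honeL : one ∈ L)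
    (hmaps : ∀ x ∈ Z, f x ∈ L) (x : Q) : floorExtend f fl x ∈ L := by
  obtain ⟨hm, h₁, h₂⟩ := hfl x
  exact L.add_mem (hmaps _ hm)
    (hL L.zero_mem honeL (sub_nonneg.mpr h₁) (sub_lt_iff_lt_add'.mpr h₂).le)

theorem floorExtend_add (hZ : IsIntegerPart Z one) (hfl : IsFloor Z one fl)
    (hadd : ∀ x ∈ Z, ∀ y ∈ Z, f (x + y) = f x + f y) (hf1 : f one = one) (x y : Q) :
    floorExtend f fl (x + y) = floorExtend f fl x + floorExtend f fl y := by
  have hx := (hfl x).1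
  have hy := (hfl y).1
  have hcarry : f (fl (x - fl x + (y - fl y))) = fl (x - fl x + (y - fl y)) := by
    rcases hfl.carry_eq_zero_or_eq_one hZ x y with h | h
    · rw [h, map_zero_of_map_add hadd]
    · rw [h, hf1]
  rw [floorExtend, floorExtend, floorExtend, hfl.add_eq hZ,
    hadd _ (Z.add_mem hx hy) _ (hfl _).1, hadd _ hx _ hy, hcarry]
  abel

theorem floorExtend_strictMono (hZ : IsIntegerPart Z one) (hfl : IsFloor Z one fl)
    (hmono : StrictMonoOn f Z) (hmaps : ∀ x ∈ Z, f x ∈ Z) : StrictMono (floorExtend f fl) := by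
  intro x y hxy
  obtain ⟨hmx, -, hx₂⟩ := hfl x
  obtain ⟨hmy, hy₁, -⟩ := hfl y
  rcases (hfl.monotone hZ hxy.le).eq_or_lt with heq | hlt
  · rw [floorExtend, floorExtend, heq]
    exact add_lt_add_right (sub_lt_sub_right hxy _) _
  · have hgap : f (fl x) + one ≤ f (fl y) :=
      hZ.add_one_le_of_lt (hmaps _ hmx) (hmaps _ hmy) (hmono hmx hmy hlt)
    calc floorExtend f fl x < f (fl x) + one := add_lt_add_right (sub_lt_iff_lt_add'.mpr hx₂) _
      _ ≤ f (fl y) := hgap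
      _ ≤ floorExtend f fl y := le_add_of_nonneg_right (sub_nonneg.mpr hy₁)

theorem floorExtend_surj (hZ : IsIntegerPart Z one) (hfl : IsFloor Z one fl)
    (hL : IsConvexAddSubgroup L) (honeL : one ∈ L) (hsurj : ∀ y ∈ Z ⊓ L, ∃ x ∈ Z, f x = y)
    {y : Q} (hy : y ∈ L) : ∃ x, floorExtend f fl x = y := by
  obtain ⟨hny, h₁, h₂⟩ := hfl y
  have hnL : fl y ∈ L := hL (L.sub_mem hy honeL) hy (sub_lt_iff_lt_add.mpr h₂).le h₁
  obtain ⟨m, hm, hfm⟩ := hsurj (fl y) ⟨hny, hnL⟩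
  have hflm : fl (m + (y - fl y)) = m :=
    hfl.eq_of_le_of_lt hZ hm (le_add_of_nonneg_right (sub_nonneg.mpr h₁))
      (add_lt_add_right (sub_lt_iff_lt_add'.mpr h₂) m)
  refine ⟨m + (y - fl y), ?_⟩
  rw [floorExtend, hflm, hfm]
  abel

end

theorem stmt_1 {Q : Type*} [AddCommGroup Q] [LinearOrder Q] [IsOrderedAddMonoid Q] (Z L : AddSubgroup Q) (one : Q)
    (fl : Q → Q) (hZ : IsIntegerPart Z one) (hfl : IsFloor Z one fl)
    (hL : IsConvexAddSubgroup L) (honeL : one ∈ L)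
    (f : Q → Q)
    (hf_mem : ∀ x ∈ Z, f x ∈ Z ⊓ L)
    (hf_add : ∀ x ∈ Z, ∀ y ∈ Z, f (x + y) = f x + f y)
    (hf_mono : ∀ x ∈ Z, ∀ y ∈ Z, x < y → f x < f y)
    (hf_surj : ∀ y ∈ Z ⊓ L, ∃ x ∈ Z, f x = y) :
    letI fbar : Q → Q := fun x => f (fl x) + (x - fl x)
    (∀ x : Q, fbar x ∈ L) ∧
    (∀ x y : Q, fbar (x + y) = fbar x + fbar y) ∧
    (∀ x y : Q, x < y → fbar x < fbar y) ∧
    (∀ y ∈ L, ∃ x : Q, fbar x = y) ∧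
    fbar '' (Z : Set Q) = ((Z ⊓ L : AddSubgroup Q) : Set Q) ∧
    fbar one = one := by
  have hmono : StrictMonoOn f Z := fun x hx y hy => hf_mono x hx y hy
  have hf1 : f one = one :=
    hZ.map_one_eq_one hf_add hmono (fun x hx => (hf_mem x hx).1) (hf_surj one ⟨hZ.1, honeL⟩)
  have himage : floorExtend f fl '' Z = ((Z ⊓ L : AddSubgroup Q) : Set Q) := by
    rw [Set.image_congr fun z hz => floorExtend_of_mem hZ hfl hz]
    exact Set.SurjOn.image_eq_of_mapsTo hf_surj hf_mem
  exact ⟨floorExtend_mem hfl hL honeL fun x hx => (hf_mem x hx).2,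
    floorExtend_add hZ hfl hf_add hf1,
    fun _ _ hxy => floorExtend_strictMono hZ hfl hmono (fun x hx => (hf_mem x hx).1) hxy,
    fun y => floorExtend_surj hZ hfl hL honeL hf_surj,
    himage,
    (floorExtend_of_mem hZ hfl hZ.1).trans hf1⟩
end

section
/- Let G be a divisible ordered abelian group that is finite-dimensional as a ℚ-vector space, and let C ⊆ G be a proper convex subgroup. Then there exists a ∈ G with a > 0 such that: (i) for every n ≥ 1 and every x ∈ C one has x < a/n, and (ii) for every u ∈ G satisfying x < u for all x ∈ C, there exists n ≥ 1 with a/n ≤ u (i.e., the set {a/n : n ≥ 1} is downwards cofinal among the elements strictly above C). -/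
section RatModule

variable {G : Type*} [AddCommGroup G] [LinearOrder G] [IsOrderedAddMonoid G] [Module ℚ G]

theorem rat_smul_nonneg {q : ℚ} (hq : 0 ≤ q) {x : G} (hx : 0 ≤ x) :
    0 ≤ q • x := by
  have h : q.den • (q • x) = q.num • x := by
    rw [← Nat.cast_smul_eq_nsmul ℚ, smul_smul, ← Int.cast_smul_eq_zsmul ℚ, Rat.den_mul_eq_num]
  exact (nsmul_nonneg_iff q.den_nz).1 (h ▸ zsmul_nonneg hx (Rat.num_nonneg.2 hq))

instance (priority := 100) posSMulStrictMono_rat_of_isOrderedAddMonoid :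
    PosSMulStrictMono ℚ G :=
  have : PosSMulMono ℚ G :=
    .of_smul_nonneg fun _ hq _ hx => rat_smul_nonneg hq hx
  PosSMulMono.toPosSMulStrictMono

end RatModule

theorem ArchimedeanClass.wellFoundedGT_of_isArtinian {M : Type*} [AddCommGroup M] [LinearOrder M]
    [IsOrderedAddMonoid M] (K : Type*) [Ring K] [LinearOrder K] [IsOrderedRing K] [Archimedean K]
    [Module K M] [PosSMulMono K M] [IsArtinian K M] : WellFoundedGT (ArchimedeanClass M) :=
  have := (FiniteArchimedeanClass.ball_strictAnti (M := M) K).wellFoundedGT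
  (FiniteArchimedeanClass.withTopOrderIso M).symm.strictMono.wellFoundedGT

section ConvexSubgroup

variable {G : Type*} [AddCommGroup G] [LinearOrder G] [IsOrderedAddMonoid G] {C : AddSubgroup G}

theorem IsConvexAddSubgroup.lt_of_mem_of_notMem (hC : IsConvexAddSubgroup C) {x a : G}
    (hx : x ∈ C) (ha : 0 ≤ a) (haC : a ∉ C) : x < a :=
  lt_of_not_ge fun hax => haC (hC C.zero_mem hx ha hax)

theorem AddSubgroup.exists_pos_notMem_forall_mk_le [WellFoundedGT (ArchimedeanClass G)]
    (hC : C ≠ ⊤) :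
    ∃ a : G, 0 < a ∧ a ∉ C ∧ ∀ b ∉ C, ArchimedeanClass.mk b ≤ ArchimedeanClass.mk a := by
  obtain ⟨c, hc⟩ := SetLike.exists_not_mem_of_ne_top C hC
  obtain ⟨_, ⟨a, haC, rfl⟩, hmax⟩ :=
    wellFounded_gt.has_min (ArchimedeanClass.mk '' (C : Set G)ᶜ) ⟨_, c, hc, rfl⟩
  refine ⟨|a|, abs_pos.2 (ne_of_mem_of_not_mem C.zero_mem haC).symm, ?_, fun b hb => ?_⟩
  · rwa [abs_mem_iff]
  · rw [ArchimedeanClass.mk_abs]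
    exact not_lt.1 (hmax _ ⟨b, hb, rfl⟩)

end ConvexSubgroup

theorem stmt_3 {G : Type*} [AddCommGroup G] [LinearOrder G] [IsOrderedAddMonoid G] [Module ℚ G]
    [FiniteDimensional ℚ G]
    (C : AddSubgroup G) (hC : IsConvexAddSubgroup C) (hproper : C ≠ ⊤) :
    ∃ a : G, 0 < a ∧
      (∀ n : ℕ, 1 ≤ n → ∀ x ∈ C, x < ((n : ℚ)⁻¹) • a) ∧
      (∀ u : G, (∀ x ∈ C, x < u) → ∃ n : ℕ, 1 ≤ n ∧ ((n : ℚ)⁻¹) • a ≤ u) := by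
  have := ArchimedeanClass.wellFoundedGT_of_isArtinian (M := G) ℚ
  obtain ⟨a, ha, haC, hmax⟩ := C.exists_pos_notMem_forall_mk_le hproper
  refine ⟨a, ha, fun n hn x hx => ?_, fun u hu => ?_⟩
  · have hn' : (0 : ℚ) < n := by exact_mod_cast hn
    refine hC.lt_of_mem_of_notMem hx (smul_pos (inv_pos.2 hn') ha).le fun hmem => haC ?_
    simpa [← Nat.cast_smul_eq_nsmul ℚ, smul_smul, hn'.ne'] using C.nsmul_mem hmem n
  · have hu0 : 0 < u := hu 0 C.zero_mem
    obtain ⟨n, hn⟩ := ArchimedeanClass.mk_le_mk.1 (hmax u fun huC => (hu u huC).false)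
    rw [abs_of_pos ha, abs_of_pos hu0] at hn
    have hn0 : 0 < n := Nat.pos_of_ne_zero <| by rintro rfl; exact (zero_nsmul u ▸ hn).not_gt ha
    refine ⟨n, hn0, ?_⟩
    rwa [inv_smul_le_iff_of_pos (by exact_mod_cast hn0), Nat.cast_smul_eq_nsmul]
end

section
/- Let G be a divisible ordered abelian group of finite dimension d as a ℚ-vector space. Then the convex subgroups of G are linearly ordered by inclusion, there are at most d + 1 of them (in particular, only finitely many), and for every proper convex subgroup C of G there exists a minimal convex subgroup C′ with C ⊊ C′. -/
/-!
Convexity makes a convex subgroup closed under division (`|x| ≤ |n • x|`), so it is a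
`ℚ`-subspace. Two convex subgroups are comparable: if `a ∈ C₁ \ C₂` and `b ∈ C₂ \ C₁`, the one
of `|a|`, `|b|` that is smaller lies between `0` and the larger one, hence in both subgroups.
On this chain of subspaces the dimension is strictly monotone, so it takes each value in
`{0, …, d}` at most once; and in a finite chain every non-maximal element has a cover.
-/

theorem isConvexAddSubgroup_top {G : Type*} [AddCommGroup G] [LinearOrder G]
    [IsOrderedAddMonoid G] : IsConvexAddSubgroup (⊤ : AddSubgroup G) :=
  fun _ _ _ _ _ _ _ => trivial

namespace IsConvexAddSubgroup

variable {G : Type*} [AddCommGroup G] [LinearOrder G] [IsOrderedAddMonoid G]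
  {C C₁ C₂ : AddSubgroup G}

theorem mem_of_abs_le (hC : IsConvexAddSubgroup C) {x y : G} (hy : y ∈ C) (h : |x| ≤ |y|) :
    x ∈ C :=
  abs_mem_iff.1 (hC C.zero_mem (abs_mem_iff.2 hy) (abs_nonneg x) h)

theorem le_total (h₁ : IsConvexAddSubgroup C₁) (h₂ : IsConvexAddSubgroup C₂) :
    C₁ ≤ C₂ ∨ C₂ ≤ C₁ := by
  by_contra! h
  obtain ⟨a, ha₁, ha₂⟩ := SetLike.not_le_iff_exists.1 h.1
  obtain ⟨b, hb₂, hb₁⟩ := SetLike.not_le_iff_exists.1 h.2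
  rcases _root_.le_total |a| |b| with hab | hba
  · exact ha₂ (h₂.mem_of_abs_le hb₂ hab)
  · exact hb₁ (h₁.mem_of_abs_le ha₁ hba)

theorem mem_of_nsmul_mem (hC : IsConvexAddSubgroup C) {x : G} {n : ℕ} (hn : n ≠ 0)
    (h : n • x ∈ C) : x ∈ C :=
  hC.mem_of_abs_le h (by rw [abs_nsmul]; exact le_self_nsmul (abs_nonneg x) hn)

section Rat

variable [Module ℚ G]

def toSubmodule (hC : IsConvexAddSubgroup C) : Submodule ℚ G where
  toAddSubmonoid := C.toAddSubmonoid
  smul_mem' q x hx := hC.mem_of_nsmul_mem q.den_ne_zero <| by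
    rw [← Nat.cast_smul_eq_nsmul ℚ, smul_smul, Rat.den_mul_eq_num, Int.cast_smul_eq_zsmul]
    exact C.zsmul_mem hx q.num

variable [FiniteDimensional ℚ G]

theorem finrank_toSubmodule_lt (h₁ : IsConvexAddSubgroup C₁) (h₂ : IsConvexAddSubgroup C₂)
    (h : C₁ < C₂) : Module.finrank ℚ h₁.toSubmodule < Module.finrank ℚ h₂.toSubmodule :=
  Submodule.finrank_lt_finrank_of_lt h

theorem injective_finrank_toSubmodule :
    Function.Injective fun C : {C : AddSubgroup G | IsConvexAddSubgroup C} =>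
      (⟨Module.finrank ℚ C.2.toSubmodule, Nat.lt_succ_of_le (Submodule.finrank_le _)⟩ :
        Fin (Module.finrank ℚ G + 1)) := by
  rintro ⟨C₁, h₁⟩ ⟨C₂, h₂⟩ h
  replace h := Fin.mk.inj_iff.1 h
  refine Subtype.ext ?_
  by_contra hne
  rcases h₁.le_total h₂ with hle | hle
  · exact (finrank_toSubmodule_lt h₁ h₂ (hle.lt_of_ne hne)).ne h
  · exact (finrank_toSubmodule_lt h₂ h₁ (hle.lt_of_ne (Ne.symm hne))).ne' h

theorem finite_setOf : {C : AddSubgroup G | IsConvexAddSubgroup C}.Finite :=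
  Set.finite_coe_iff.1 (Finite.of_injective _ injective_finrank_toSubmodule)

theorem natCard_setOf_le :
    Nat.card {C : AddSubgroup G | IsConvexAddSubgroup C} ≤ Module.finrank ℚ G + 1 := by
  simpa using Nat.card_le_card_of_injective _ injective_finrank_toSubmodule

theorem exists_least_gt (hne : C ≠ ⊤) :
    ∃ C' : AddSubgroup G, IsConvexAddSubgroup C' ∧ C < C' ∧
      ∀ C'' : AddSubgroup G, IsConvexAddSubgroup C'' → C < C'' → C' ≤ C'' := by
  have hfin : {D | IsConvexAddSubgroup D ∧ C < D}.Finite := finite_setOf.subset fun _ hD => hD.1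
  obtain ⟨C', ⟨hC', hCC'⟩, hmin⟩ :=
    hfin.exists_minimal ⟨⊤, isConvexAddSubgroup_top, lt_top_iff_ne_top.2 hne⟩
  exact ⟨C', hC', hCC', fun C'' hC'' hCC'' => (hC'.le_total hC'').elim id (hmin ⟨hC'', hCC''⟩)⟩

end Rat

end IsConvexAddSubgroup

theorem stmt_5 {G : Type*} [AddCommGroup G] [LinearOrder G] [IsOrderedAddMonoid G] [Module ℚ G]
    [FiniteDimensional ℚ G] :
    (∀ C₁ C₂ : AddSubgroup G, IsConvexAddSubgroup C₁ → IsConvexAddSubgroup C₂ →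
      C₁ ≤ C₂ ∨ C₂ ≤ C₁) ∧
    {C : AddSubgroup G | IsConvexAddSubgroup C}.Finite ∧
    Nat.card {C : AddSubgroup G | IsConvexAddSubgroup C} ≤ Module.finrank ℚ G + 1 ∧
    (∀ C : AddSubgroup G, IsConvexAddSubgroup C → C ≠ ⊤ →
      ∃ C' : AddSubgroup G, IsConvexAddSubgroup C' ∧ C < C' ∧
        ∀ C'' : AddSubgroup G, IsConvexAddSubgroup C'' → C < C'' → C' ≤ C'') :=
  ⟨fun _ _ h₁ h₂ => h₁.le_total h₂, IsConvexAddSubgroup.finite_setOf,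
    IsConvexAddSubgroup.natCard_setOf_le, fun _ _ hne => IsConvexAddSubgroup.exists_least_gt hne⟩
end

section
/- Let Q be a divisible ordered abelian group and Z an integer part of Q with least positive element 1. Then Z is a ℤ-group: for every x ∈ Z and every integer m ≥ 1, there is a unique k ∈ {0, 1, …, m−1} such that x ≡ k (mod m), i.e., x − k·1 ∈ m·Z. -/
/-- `x ≡ k (mod m)` with respect to the integer part `Z` with least positive element `one`:
`x - k·one ∈ m·Z`. -/
def ModCong {Q : Type*} [AddCommGroup Q] [LinearOrder Q] [IsOrderedAddMonoid Q] (Z : AddSubgroup Q) (one : Q)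
    (m : ℕ) (k : ℤ) (x : Q) : Prop :=
  ∃ z ∈ Z, x - k • one = m • z

/-!
Divide `x` by `m` in `Q` and take the floor `n` of `x / m`: then `x - m • n` lies in `Z ∩ [0, m • 1)`.
Since `Z` has no element strictly between `0` and `1`, walking down by `1` shows that the elements
of `Z ∩ [0, m • 1)` are exactly `0, 1, …, (m - 1) • 1`; this gives the residue. Two residues
`a > b` would give `0 < (a - b) • 1 = m • z` with `z ∈ Z`, forcing `z ≥ 1` and `(a - b) • 1 ≥ m • 1`.
-/

namespace IsIntegerPart

variable {Q : Type*} [AddCommGroup Q] [LinearOrder Q] [IsOrderedAddMonoid Q]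
  {Z : AddSubgroup Q} {one : Q}

theorem exists_eq_nsmul_of_lt_nsmul (hZ : IsIntegerPart Z one) :
    ∀ (m : ℕ) {z : Q}, z ∈ Z → 0 ≤ z → z < m • one → ∃ k < m, z = k • one := by
  obtain ⟨hone, -, hleast, -⟩ := hZ
  intro m
  induction m with
  | zero => intro z _ h0 hlt; exact absurd (h0.trans_lt (by simpa using hlt)) (lt_irrefl 0)
  | succ m ih =>
    intro z hz h0 hlt
    rcases lt_or_ge z one with hz1 | hz1
    · have : z = 0 := h0.antisymm' (not_lt.mp fun hpos => (hleast z hz hpos).not_gt hz1)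
      exact ⟨0, m.succ_pos, by simp [this]⟩
    · rw [succ_nsmul] at hlt
      obtain ⟨k, hk, hzk⟩ :=
        ih (sub_mem hz hone) (sub_nonneg.mpr hz1) (sub_lt_iff_lt_add.mpr hlt)
      exact ⟨k + 1, Nat.succ_lt_succ hk, by rw [succ_nsmul, ← hzk, sub_add_cancel]⟩

theorem eq_of_nsmul_sub_nsmul_eq_nsmul (hZ : IsIntegerPart Z one) {a b m : ℕ} (ha : a < m)
    (hb : b < m) {z : Q} (hz : z ∈ Z) (h : a • one - b • one = m • z) : a = b := by
  wlog hba : b ≤ a generalizing a b z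
  · refine (this hb ha (neg_mem hz) ?_ (le_of_not_ge hba)).symm
    rw [smul_neg, ← h, neg_sub]
  obtain ⟨-, hone, hleast, -⟩ := hZ
  by_contra hne
  have hdiff : (a - b) • one = m • z := by rw [sub_nsmul one hba, ← sub_eq_add_neg, h]
  have hdiff_pos : 0 < m • z := hdiff ▸ nsmul_pos hone (by omega)
  have hz_ge : one ≤ z := hleast z hz ((nsmul_pos_iff (by omega)).mp hdiff_pos)
  have : m • one ≤ (a - b) • one := hdiff ▸ nsmul_le_nsmul_right hz_ge m
  exact this.not_gt (nsmul_lt_nsmul_left hone (by omega))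

theorem exists_nsmul_sub_eq_nsmul (hZ : IsIntegerPart Z one)
    (hdiv : ∀ (x : Q) (n : ℕ), 0 < n → ∃ y : Q, n • y = x) {x : Q} (hx : x ∈ Z) {m : ℕ}
    (hm : 0 < m) : ∃ k < m, ∃ n ∈ Z, x - k • one = m • n := by
  obtain ⟨y, rfl⟩ := hdiv x m hm
  obtain ⟨n, hn, hny, hyn⟩ := hZ.2.2.2 y
  have hrem : m • y - m • n = m • (y - n) := (nsmul_sub y n m).symm
  obtain ⟨k, hk, hrem_eq⟩ := hZ.exists_eq_nsmul_of_lt_nsmul m (sub_mem hx (nsmul_mem hn m))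
    (hrem ▸ nsmul_nonneg (sub_nonneg.mpr hny) m)
    (hrem ▸ nsmul_lt_nsmul_right hm.ne' (sub_lt_iff_lt_add'.mpr hyn))
  exact ⟨k, hk, n, hn, by rw [← hrem_eq, sub_sub_cancel]⟩

end IsIntegerPart

theorem stmt_7 {Q : Type*} [AddCommGroup Q] [LinearOrder Q] [IsOrderedAddMonoid Q]
    (hdiv : ∀ (x : Q) (n : ℕ), 0 < n → ∃ y : Q, n • y = x)
    (Z : AddSubgroup Q) (one : Q) (hZ : IsIntegerPart Z one) :
    ∀ x ∈ Z, ∀ m : ℕ, 1 ≤ m → ∃! k : ℕ, k < m ∧ ModCong Z one m (k : ℤ) x := by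
  intro x hx m hm
  obtain ⟨k, hk, n, hn, hxk⟩ := hZ.exists_nsmul_sub_eq_nsmul hdiv hx hm
  refine ⟨k, ⟨hk, n, hn, by rwa [natCast_zsmul]⟩, ?_⟩
  rintro k' ⟨hk', n', hn', hxk'⟩
  rw [natCast_zsmul] at hxk'
  refine hZ.eq_of_nsmul_sub_nsmul_eq_nsmul hk' hk (sub_mem hn hn') ?_
  rw [nsmul_sub, ← hxk, ← hxk', sub_sub_sub_cancel_left]
end

section
/- Let Q be a divisible ordered abelian group, Z an integer part of Q with least positive element 1, and L a convex subgroup of Q with 1 ∈ L. Let (c_i)_{i∈I} and (d_j)_{j∈J} be nonempty finite families of elements of Q, m ≥ 1 an integer, and k ∈ {0, …, m−1}. Then the following are equivalent: (a) there exists x ∈ Z with x ≡ k (mod m) such that for all i ∈ I and j ∈ J: x ≤ c_i, d_j ≤ x, c_i − x ∉ L, and x − d_j ∉ L; (b) for all i ∈ I and j ∈ J: d_j ≤ c_i and c_i − d_j ∉ L. -/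
/-!
Take `C = min c` and `D = max d`; the gap `C - D` lies outside `L`, hence so does its half `h`,
and by convexity `h` exceeds every multiple `m • 1 ∈ L`. The point `D + h` has an element `x` of
`Z` with `x ≡ k (mod m)` at most `m • 1` below it (divide by `m`, take the floor, multiply back),
and then both `C - x ≥ h` and `x - D ≥ h - m • 1` lie outside `L`.
-/

section

variable {Q : Type*} [AddCommGroup Q] [LinearOrder Q] [IsOrderedAddMonoid Q]

namespace IsConvexAddSubgroup

variable {L : AddSubgroup Q}

theorem notMem_of_le (hL : IsConvexAddSubgroup L) {a b : Q} (ha : a ∉ L) (ha0 : 0 ≤ a)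
    (hab : a ≤ b) : b ∉ L :=
  fun hb => ha (hL L.zero_mem hb ha0 hab)

theorem lt_of_mem_of_notMem_s11 (hL : IsConvexAddSubgroup L) {u a : Q} (hu : u ∈ L) (ha : a ∉ L)
    (ha0 : 0 ≤ a) : u < a :=
  lt_of_not_ge fun hau => hL.notMem_of_le ha ha0 hau hu

end IsConvexAddSubgroup

theorem IsIntegerPart.exists_modCong_le_lt (hdiv : ∀ (x : Q) (n : ℕ), 0 < n → ∃ y : Q, n • y = x)
    {Z : AddSubgroup Q} {one : Q} (hZ : IsIntegerPart Z one) {m : ℕ} (hm : 1 ≤ m) (k : ℤ)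
    (y : Q) : ∃ x ∈ Z, ModCong Z one m k x ∧ x ≤ y ∧ y - x < m • one := by
  obtain ⟨honeZ, -, -, hfloor⟩ := hZ
  obtain ⟨t, ht⟩ := hdiv (y - k • one) m hm
  obtain ⟨w, hwZ, hwt, htw⟩ := hfloor t
  have hyx : y - (m • w + k • one) = m • (t - w) := by rw [nsmul_sub, ht]; abel
  refine ⟨m • w + k • one, Z.add_mem (Z.nsmul_mem hwZ m) (Z.zsmul_mem honeZ k),
    ⟨w, hwZ, add_sub_cancel_right _ _⟩, ?_, ?_⟩
  · exact sub_nonneg.mp (hyx ▸ nsmul_nonneg (sub_nonneg.mpr hwt) m)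
  · rw [hyx]
    exact nsmul_lt_nsmul_right (by omega) (sub_lt_iff_lt_add'.mpr htw)

theorem exists_modCong_between (hdiv : ∀ (x : Q) (n : ℕ), 0 < n → ∃ y : Q, n • y = x)
    {Z L : AddSubgroup Q} {one : Q} (hZ : IsIntegerPart Z one) (hL : IsConvexAddSubgroup L)
    (honeL : one ∈ L) {m : ℕ} (hm : 1 ≤ m) (k : ℤ) {C D : Q} (hDC : D ≤ C) (hCD : C - D ∉ L) :
    ∃ x ∈ Z, ModCong Z one m k x ∧ D ≤ x ∧ x ≤ C ∧ C - x ∉ L ∧ x - D ∉ L := by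
  obtain ⟨h, hh⟩ := hdiv (C - D) 2 two_pos
  rw [two_nsmul] at hh
  have hh0 : 0 ≤ h := by
    by_contra! hneg
    exact (add_neg hneg hneg).not_ge (hh ▸ sub_nonneg.mpr hDC)
  have hhL : h ∉ L := fun hmem => hCD (hh ▸ L.add_mem hmem hmem)
  have hmh : m • one < h := hL.lt_of_mem_of_notMem_s11 (L.nsmul_mem honeL m) hhL hh0
  have hgapL : h - m • one ∉ L := fun hmem =>
    hhL (by simpa using L.add_mem hmem (L.nsmul_mem honeL m))
  obtain ⟨x, hxZ, hxk, hxy, hyx⟩ := hZ.exists_modCong_le_lt hdiv hm k (D + h)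
  have hCx : h ≤ C - x := by
    calc h = C - (D + h) := by rw [sub_add_eq_sub_sub, ← hh]; abel
      _ ≤ C - x := sub_le_sub_left hxy C
  have hxD : h - m • one < x - D := by
    calc h - m • one = D + h - m • one - D := by abel
      _ < x - D := sub_lt_sub_right (sub_lt_comm.mp hyx) D
  have hgap0 : 0 < h - m • one := sub_pos.mpr hmh
  exact ⟨x, hxZ, hxk, sub_nonneg.mp (hgap0.trans hxD).le, sub_nonneg.mp (hh0.trans hCx),
    hL.notMem_of_le hhL hh0 hCx, hL.notMem_of_le hgapL hgap0.le hxD.le⟩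

end

theorem stmt_11_general {Q : Type*} [AddCommGroup Q] [LinearOrder Q] [IsOrderedAddMonoid Q]
    (hdiv : ∀ (x : Q) (n : ℕ), 0 < n → ∃ y : Q, n • y = x)
    (Z L : AddSubgroup Q) (one : Q) (hZ : IsIntegerPart Z one)
    (hL : IsConvexAddSubgroup L) (honeL : one ∈ L)
    {ι κ : Type*} [Finite ι] [Finite κ] [Nonempty ι] [Nonempty κ]
    (c : ι → Q) (d : κ → Q)
    (m : ℕ) (hm : 1 ≤ m) (k : ℕ) :
    (∃ x ∈ Z, ModCong Z one m (k : ℤ) x ∧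
        ∀ (i : ι) (j : κ), x ≤ c i ∧ d j ≤ x ∧ c i - x ∉ L ∧ x - d j ∉ L) ↔
      (∀ (i : ι) (j : κ), d j ≤ c i ∧ c i - d j ∉ L) := by
  constructor
  · rintro ⟨x, -, -, hx⟩ i j
    obtain ⟨hxc, hdx, hcx, -⟩ := hx i j
    exact ⟨hdx.trans hxc, hL.notMem_of_le hcx (sub_nonneg.mpr hxc) (sub_le_sub_left hdx _)⟩
  · intro h
    obtain ⟨i₀, hi₀⟩ := Finite.exists_min c
    obtain ⟨j₀, hj₀⟩ := Finite.exists_max d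
    obtain ⟨x, hxZ, hxk, hDx, hxC, hCx, hxD⟩ :=
      exists_modCong_between hdiv hZ hL honeL hm k (h i₀ j₀).1 (h i₀ j₀).2
    refine ⟨x, hxZ, hxk, fun i j => ⟨hxC.trans (hi₀ i), (hj₀ j).trans hDx, ?_, ?_⟩⟩
    · exact hL.notMem_of_le hCx (sub_nonneg.mpr hxC) (sub_le_sub_right (hi₀ i) x)
    · exact hL.notMem_of_le hxD (sub_nonneg.mpr hDx) (sub_le_sub_left (hj₀ j) x)

theorem stmt_11 {Q : Type*} [AddCommGroup Q] [LinearOrder Q] [IsOrderedAddMonoid Q]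
    (hdiv : ∀ (x : Q) (n : ℕ), 0 < n → ∃ y : Q, n • y = x)
    (Z L : AddSubgroup Q) (one : Q) (hZ : IsIntegerPart Z one)
    (hL : IsConvexAddSubgroup L) (honeL : one ∈ L)
    {ι κ : Type*} [Finite ι] [Finite κ] [Nonempty ι] [Nonempty κ]
    (c : ι → Q) (d : κ → Q)
    (m : ℕ) (hm : 1 ≤ m) (k : ℕ) (hk : k < m) :
    (∃ x ∈ Z, ModCong Z one m (k : ℤ) x ∧
        ∀ (i : ι) (j : κ), x ≤ c i ∧ d j ≤ x ∧ c i - x ∉ L ∧ x - d j ∉ L) ↔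
      (∀ (i : ι) (j : κ), d j ≤ c i ∧ c i - d j ∉ L) :=
  stmt_11_general hdiv Z L one hZ hL honeL c d m hm k
end

section
/- Let Q be a divisible ordered abelian group, Z an integer part of Q with least positive element 1, and L a convex subgroup of Q with 1 ∈ L. Let (c_i)_{i∈I} and (d_j)_{j∈J} be finite (possibly empty) families of elements of Q, m ≥ 1 an integer, and k ∈ {0, …, m−1}. Then the following are equivalent: (a) there exists x ∈ Z ∩ L with x ≡ k (mod m) such that d_j ≤ x ≤ c_i for all i ∈ I and j ∈ J; (b) for every i ∈ I, c_i ≥ 0 or c_i ∈ L; for every j ∈ J, d_j ≤ 0 or d_j ∈ L; and for every i ∈ I and j ∈ J there exists x ∈ Z with d_j ≤ x ≤ c_i and x ≡ k (mod m). -/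
/-!
Since `Q` is divisible, `k + m·⌊(t - k)/m⌋` is an integer `≡ k (mod m)` in `(t - m, t]` for
every `t`. The sign-or-membership conditions bound the `d j` above by some `A ∈ L` and the `c i`
below by some `B ∈ L`, and the pairwise condition together with finiteness yields one congruent
integer `x₀` between all `d j` and all `c i`. If `x₀` lies in `[B - m, A + m]` it is in `L` by
convexity; otherwise the congruent integer in `(A, A + m]`, resp. in `(B - m, B]`, lies in `L`
and still satisfies all the bounds.
-/

section IntegerPart

variable {Q : Type*} [AddCommGroup Q] [LinearOrder Q] [IsOrderedAddMonoid Q]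

theorem IsIntegerPart.exists_modCong_mem_Ioc
    (hdiv : ∀ (x : Q) (n : ℕ), 0 < n → ∃ y : Q, n • y = x)
    {Z : AddSubgroup Q} {one : Q} (hZ : IsIntegerPart Z one) {m : ℕ} (hm : 0 < m) (k : ℤ)
    (t : Q) : ∃ x ∈ Z, ModCong Z one m k x ∧ x ∈ Set.Ioc (t - m • one) t := by
  obtain ⟨y, hy⟩ := hdiv (t - k • one) m hm
  obtain ⟨n, hnZ, hny, hyn⟩ := hZ.2.2.2 y
  refine ⟨k • one + m • n, Z.add_mem (Z.zsmul_mem hZ.1 k) (Z.nsmul_mem hnZ m),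
    ⟨n, hnZ, add_sub_cancel_left _ _⟩, ?_, ?_⟩
  · have hlt : t - k • one < m • n + m • one := by
      rw [← hy, ← nsmul_add]
      exact nsmul_lt_nsmul_right hm.ne' hyn
    calc t - m • one = t - k • one - m • one + k • one := by abel
      _ < m • n + m • one - m • one + k • one := by gcongr
      _ = k • one + m • n := by abel
  · rw [add_comm]
    exact le_sub_iff_add_le.mp (hy ▸ nsmul_le_nsmul_right hny m)

theorem IsConvexAddSubgroup.nonneg_or_mem_of_le {L : AddSubgroup Q} (hL : IsConvexAddSubgroup L)
    {x c : Q} (hx : x ∈ L) (hxc : x ≤ c) : 0 ≤ c ∨ c ∈ L :=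
  (le_or_gt 0 c).imp_right fun hc => hL hx L.zero_mem hxc hc.le

theorem IsConvexAddSubgroup.nonpos_or_mem_of_ge {L : AddSubgroup Q} (hL : IsConvexAddSubgroup L)
    {x d : Q} (hx : x ∈ L) (hdx : d ≤ x) : d ≤ 0 ∨ d ∈ L :=
  (le_or_gt d 0).imp_right fun hd => hL L.zero_mem hx hd.le hdx

theorem AddSubgroup.exists_mem_ge_of_forall_nonpos_or_mem {κ : Type*} [Finite κ]
    (L : AddSubgroup Q) (d : κ → Q) (hd : ∀ j, d j ≤ 0 ∨ d j ∈ L) :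
    ∃ A ∈ L, ∀ j, d j ≤ A := by
  cases nonempty_fintype κ
  refine ⟨∑ j, max (d j) 0, L.sum_mem fun j _ => ?_, fun j => ?_⟩
  · rcases hd j with h | h
    · rw [max_eq_right h]
      exact L.zero_mem
    · rcases max_choice (d j) 0 with e | e <;> rw [e]
      exacts [h, L.zero_mem]
  · exact (le_max_left _ _).trans
      (Finset.single_le_sum (fun j _ => le_max_right (d j) 0) (Finset.mem_univ j))

theorem AddSubgroup.exists_mem_le_of_forall_nonneg_or_mem {ι : Type*} [Finite ι]
    (L : AddSubgroup Q) (c : ι → Q) (hc : ∀ i, 0 ≤ c i ∨ c i ∈ L) :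
    ∃ B ∈ L, ∀ i, B ≤ c i := by
  obtain ⟨A, hAL, hA⟩ :=
    L.exists_mem_ge_of_forall_nonpos_or_mem (fun i => -c i) fun i =>
      (hc i).imp neg_nonpos.mpr L.neg_mem
  exact ⟨-A, L.neg_mem hAL, fun i => neg_le.mpr (hA i)⟩

end IntegerPart

theorem exists_mem_between_of_forall_exists_mem_between {α : Type*} [LinearOrder α]
    {ι κ : Type*} [Finite ι] [Finite κ] (S : Set α) (c : ι → α) (d : κ → α)
    (hc : ∃ x ∈ S, ∀ i, x ≤ c i) (hd : ∃ x ∈ S, ∀ j, d j ≤ x)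
    (hcd : ∀ i j, ∃ x ∈ S, d j ≤ x ∧ x ≤ c i) :
    ∃ x ∈ S, (∀ i, x ≤ c i) ∧ ∀ j, d j ≤ x := by
  rcases isEmpty_or_nonempty ι with _ | _
  · obtain ⟨x, hxS, hx⟩ := hd
    exact ⟨x, hxS, isEmptyElim, hx⟩
  rcases isEmpty_or_nonempty κ with _ | _
  · obtain ⟨x, hxS, hx⟩ := hc
    exact ⟨x, hxS, hx, isEmptyElim⟩
  obtain ⟨i₀, hi₀⟩ := Finite.exists_min c
  obtain ⟨j₀, hj₀⟩ := Finite.exists_max d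
  obtain ⟨x, hxS, hdx, hxc⟩ := hcd i₀ j₀
  exact ⟨x, hxS, fun i => hxc.trans (hi₀ i), fun j => (hj₀ j).trans hdx⟩

theorem stmt_12_general {Q : Type*} [AddCommGroup Q] [LinearOrder Q] [IsOrderedAddMonoid Q]
    (hdiv : ∀ (x : Q) (n : ℕ), 0 < n → ∃ y : Q, n • y = x)
    (Z L : AddSubgroup Q) (one : Q) (hZ : IsIntegerPart Z one)
    (hL : IsConvexAddSubgroup L) (honeL : one ∈ L)
    {ι κ : Type*} [Finite ι] [Finite κ]
    (c : ι → Q) (d : κ → Q)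
    (m : ℕ) (hm : 1 ≤ m) (k : ℕ) :
    (∃ x ∈ Z ⊓ L, ModCong Z one m (k : ℤ) x ∧
        (∀ i : ι, x ≤ c i) ∧ (∀ j : κ, d j ≤ x)) ↔
      ((∀ i : ι, 0 ≤ c i ∨ c i ∈ L) ∧ (∀ j : κ, d j ≤ 0 ∨ d j ∈ L) ∧
        ∀ (i : ι) (j : κ), ∃ x ∈ Z, d j ≤ x ∧ x ≤ c i ∧ ModCong Z one m (k : ℤ) x) := by
  constructor
  · rintro ⟨x, hx, hxk, hxc, hdx⟩
    exact ⟨fun i => hL.nonneg_or_mem_of_le hx.2 (hxc i),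
      fun j => hL.nonpos_or_mem_of_ge hx.2 (hdx j), fun i j => ⟨x, hx.1, hdx j, hxc i, hxk⟩⟩
  rintro ⟨hc, hd, hcd⟩
  obtain ⟨A, hAL, hdA⟩ := L.exists_mem_ge_of_forall_nonpos_or_mem d hd
  obtain ⟨B, hBL, hBc⟩ := L.exists_mem_le_of_forall_nonneg_or_mem c hc
  have hmL : m • one ∈ L := L.nsmul_mem honeL m
  obtain ⟨xA, hxAZ, hxAk, hAxA, hxA_le⟩ := hZ.exists_modCong_mem_Ioc hdiv hm k (A + m • one)
  rw [add_sub_cancel_right] at hAxA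
  obtain ⟨xB, hxBZ, hxBk, hxB_gt, hxBB⟩ := hZ.exists_modCong_mem_Ioc hdiv hm k B
  obtain ⟨x, ⟨hxZ, hxk⟩, hxc, hdx⟩ :=
    exists_mem_between_of_forall_exists_mem_between {x | x ∈ Z ∧ ModCong Z one m k x} c d
      ⟨xB, ⟨hxBZ, hxBk⟩, fun i => hxBB.trans (hBc i)⟩
      ⟨xA, ⟨hxAZ, hxAk⟩, fun j => (hdA j).trans hAxA.le⟩
      fun i j => (hcd i j).imp fun x ⟨hxZ, hdx, hxc, hxk⟩ => ⟨⟨hxZ, hxk⟩, hdx, hxc⟩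
  rcases lt_or_ge (A + m • one) x with hAx | hxA
  · exact ⟨xA, ⟨hxAZ, hL hAL (L.add_mem hAL hmL) hAxA.le hxA_le⟩, hxAk,
      fun i => (hxA_le.trans hAx.le).trans (hxc i), fun j => (hdA j).trans hAxA.le⟩
  rcases lt_or_ge x (B - m • one) with hxB | hBx
  · exact ⟨xB, ⟨hxBZ, hL (L.sub_mem hBL hmL) hBL hxB_gt.le hxBB⟩, hxBk,
      fun i => hxBB.trans (hBc i), fun j => (hdx j).trans (hxB.trans hxB_gt).le⟩
  exact ⟨x, ⟨hxZ, hL (L.sub_mem hBL hmL) (L.add_mem hAL hmL) hBx hxA⟩, hxk, hxc, hdx⟩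

theorem stmt_12 {Q : Type*} [AddCommGroup Q] [LinearOrder Q] [IsOrderedAddMonoid Q]
    (hdiv : ∀ (x : Q) (n : ℕ), 0 < n → ∃ y : Q, n • y = x)
    (Z L : AddSubgroup Q) (one : Q) (hZ : IsIntegerPart Z one)
    (hL : IsConvexAddSubgroup L) (honeL : one ∈ L)
    {ι κ : Type*} [Finite ι] [Finite κ]
    (c : ι → Q) (d : κ → Q)
    (m : ℕ) (hm : 1 ≤ m) (k : ℕ) (hk : k < m) :
    (∃ x ∈ Z ⊓ L, ModCong Z one m (k : ℤ) x ∧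
        (∀ i : ι, x ≤ c i) ∧ (∀ j : κ, d j ≤ x)) ↔
      ((∀ i : ι, 0 ≤ c i ∨ c i ∈ L) ∧ (∀ j : κ, d j ≤ 0 ∨ d j ∈ L) ∧
        ∀ (i : ι) (j : κ), ∃ x ∈ Z, d j ≤ x ∧ x ≤ c i ∧ ModCong Z one m (k : ℤ) x) :=
  stmt_12_general hdiv Z L one hZ hL honeL c d m hm k
end
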